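/- Suppose β_E ∈ [0,1] and β_B = 1. For any feasible point x ∈ X of problem (P1), the modified point x′ obtained by keeping all other variables equal and setting e_i′ = e_i − min(e₁, e₂) and w_i′ = w_i − min(w₁, w₂) for i = 1, 2 is also feasible (x′ ∈ X), satisfies e₁′·e₂′ = 0 and w₁′·w₂′ = 0, and achieves the same costs C_i(x′) = C_i(x) for i = 1, 2. Hence without loss of optimality one may assume that the exchanged energies, and likewise the exchanged bandwidths, are not simultaneously positive. -/

import Mathlib

/-- Decision vector of problem (P1). -/
abbrev P1Vec (ι : Type*) :=
  (Fin 2 → ℝ) × (Fin 2 → ℝ) × (Fin 2 → ℝ) × (Fin 2 → ℝ) × (ι → ℝ) × (ι → ℝ)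

/-- Feasibility (membership in the region `X`) for problem (P1). -/
def P1Feasible {ι : Type*} [DecidableEq ι] (K : Fin 2 → Finset ι) (g r : ι → ℝ)
    (W Pc Ebar : Fin 2 → ℝ) (N₀ βE βB : ℝ) (x : P1Vec ι) : Prop :=
  match x with
  | (E, G, e, w, p, b) =>
    (∀ i, 0 ≤ E i) ∧ (∀ i, 0 ≤ G i) ∧ (∀ i, 0 ≤ e i) ∧ (∀ i, 0 ≤ w i) ∧
    (∀ k ∈ K 0 ∪ K 1, 0 ≤ p k) ∧ (∀ k ∈ K 0 ∪ K 1, 0 < b k) ∧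
    (∀ i, (∑ k ∈ K i, p k) + Pc i ≤ E i + G i + βE * e (1 - i) - e i) ∧
    (∀ i, (∑ k ∈ K i, b k) ≤ W i + βB * w (1 - i) - w i) ∧
    (∀ i, E i ≤ Ebar i) ∧
    (∀ i, ∀ k ∈ K i, r k ≤ b k * Real.logb 2 (1 + g k * p k / (b k * N₀)))

/-- The energy cost of system `i`: `C_i(x) = αE_i·E_i + αG_i·G_i`. -/
def P1Cost {ι : Type*} [DecidableEq ι] (αE αG : Fin 2 → ℝ) (i : Fin 2) (x : P1Vec ι) : ℝ :=
  αE i * x.1 i + αG i * x.2.1 i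

/-! Lowering both exchanged quantities by the same amount `m ≥ 0` changes the right-hand side
of each balance constraint by `(1 - β) m ≥ 0`, so every constraint stays satisfied, while the
costs do not involve the exchanged quantities at all. Taking `m` to be the smaller of the two
exchanged quantities makes one of them vanish. -/

theorem sub_min_mul_sub_min_eq_zero {α : Type*} [Ring α] [LinearOrder α] (a b : α) :
    (a - min a b) * (b - min a b) = 0 := by
  rcases min_choice a b with h | h <;> simp [h]

theorem min_fin_two_le {α : Type*} [LinearOrder α] (v : Fin 2 → α) (i : Fin 2) :
    min (v 0) (v 1) ≤ v i := by
  fin_cases i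
  · exact min_le_left _ _
  · exact min_le_right _ _

theorem mul_sub_sub_le_mul_sub_sub_sub {α : Type*} [CommRing α] [LinearOrder α]
    [IsOrderedRing α] {β m u v : α} (hβ : β ≤ 1) (hm : 0 ≤ m) :
    β * u - v ≤ β * (u - m) - (v - m) := by
  have h : β * (u - m) - (v - m) = β * u - v + (1 - β) * m := by ring
  rw [h]
  exact le_add_of_nonneg_right (mul_nonneg (sub_nonneg.2 hβ) hm)

theorem P1Feasible.sub_min_exchange {ι : Type*} [DecidableEq ι] {K : Fin 2 → Finset ι}
    {g r : ι → ℝ} {W Pc Ebar : Fin 2 → ℝ} {N₀ βE βB : ℝ} {E G e w : Fin 2 → ℝ} {p b : ι → ℝ}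
    (hβE : βE ≤ 1) (hβB : βB ≤ 1) (hx : P1Feasible K g r W Pc Ebar N₀ βE βB (E, G, e, w, p, b)) :
    P1Feasible K g r W Pc Ebar N₀ βE βB
      (E, G, fun i => e i - min (e 0) (e 1), fun i => w i - min (w 0) (w 1), p, b) := by
  obtain ⟨hE, hG, he, hw, hp, hb, hpower, hband, hEbar, hqos⟩ := hx
  have hme : 0 ≤ min (e 0) (e 1) := le_min (he 0) (he 1)
  have hmw : 0 ≤ min (w 0) (w 1) := le_min (hw 0) (hw 1)
  refine ⟨hE, hG, fun i => sub_nonneg.2 (min_fin_two_le e i),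
    fun i => sub_nonneg.2 (min_fin_two_le w i), hp, hb, fun i => ?_, fun i => ?_, hEbar, hqos⟩
  · linarith [hpower i, mul_sub_sub_le_mul_sub_sub_sub (u := e (1 - i)) (v := e i) hβE hme]
  · linarith [hband i, mul_sub_sub_le_mul_sub_sub_sub (u := w (1 - i)) (v := w i) hβB hmw]

theorem P1_wlog_no_simultaneous_exchange_general {ι : Type*} [DecidableEq ι] (K : Fin 2 → Finset ι)
    (g r : ι → ℝ)
    (W Pc Ebar αE αG : Fin 2 → ℝ)
    (N₀ βE : ℝ) (hβE : βE ∈ Set.Icc (0 : ℝ) 1)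
    (E G e w : Fin 2 → ℝ) (p b : ι → ℝ)
    (hx : P1Feasible K g r W Pc Ebar N₀ βE 1 (E, G, e, w, p, b)) :
    P1Feasible K g r W Pc Ebar N₀ βE 1
      (E, G, fun i => e i - min (e 0) (e 1), fun i => w i - min (w 0) (w 1), p, b) ∧
    (e 0 - min (e 0) (e 1)) * (e 1 - min (e 0) (e 1)) = 0 ∧
    (w 0 - min (w 0) (w 1)) * (w 1 - min (w 0) (w 1)) = 0 ∧
    ∀ i, P1Cost αE αG i
        (E, G, fun i => e i - min (e 0) (e 1), fun i => w i - min (w 0) (w 1), p, b) =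
      P1Cost αE αG i (E, G, e, w, p, b) :=
  ⟨hx.sub_min_exchange hβE.2 le_rfl, sub_min_mul_sub_min_eq_zero _ _,
    sub_min_mul_sub_min_eq_zero _ _, fun _ => rfl⟩

/-- With `βE ∈ [0,1]` and `βB = 1`, subtracting `min(e₁,e₂)` from both
shared energies and `min(w₁,w₂)` from both shared bandwidths preserves feasibility,
yields `e₁′·e₂′ = 0` and `w₁′·w₂′ = 0`, and leaves both costs unchanged. -/
theorem P1_wlog_no_simultaneous_exchange {ι : Type*} [DecidableEq ι] (K : Fin 2 → Finset ι)
    (hK : ∀ i, (K i).Nonempty) (hdisj : Disjoint (K 0) (K 1))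
    (g r : ι → ℝ) (hg : ∀ k ∈ K 0 ∪ K 1, 0 < g k) (hr : ∀ k ∈ K 0 ∪ K 1, 0 < r k)
    (W Pc Ebar αE αG : Fin 2 → ℝ)
    (hW : ∀ i, 0 < W i) (hPc : ∀ i, 0 ≤ Pc i) (hEbar : ∀ i, 0 ≤ Ebar i)
    (hαE : ∀ i, 0 < αE i) (hα : ∀ i, αE i < αG i)
    (N₀ βE : ℝ) (hN₀ : 0 < N₀) (hβE : βE ∈ Set.Icc (0 : ℝ) 1)
    (E G e w : Fin 2 → ℝ) (p b : ι → ℝ)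
    (hx : P1Feasible K g r W Pc Ebar N₀ βE 1 (E, G, e, w, p, b)) :
    P1Feasible K g r W Pc Ebar N₀ βE 1
      (E, G, fun i => e i - min (e 0) (e 1), fun i => w i - min (w 0) (w 1), p, b) ∧
    (e 0 - min (e 0) (e 1)) * (e 1 - min (e 0) (e 1)) = 0 ∧
    (w 0 - min (w 0) (w 1)) * (w 1 - min (w 0) (w 1)) = 0 ∧
    ∀ i, P1Cost αE αG i
        (E, G, fun i => e i - min (e 0) (e 1), fun i => w i - min (w 0) (w 1), p, b) =
      P1Cost αE αG i (E, G, e, w, p, b) :=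
  P1_wlog_no_simultaneous_exchange_general K g r W Pc Ebar αE αG N₀ βE hβE E G e w p b hx
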